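/- Hölder-1/2 stability of the backward hitting time under orthogonal spatial shifts: suppose x, x̃ both lie in the annulus with (x − x̃)_p · v_p = 0, x̃_{ver} = x_{ver}, and both backward trajectories hit the inner circle of radius r (with the square roots below well-defined). Then |v|_p² |t_b(x,v) − t_b(x̃,v)| ≤ C |v|_p |x − x̃|^{1/2} for a constant C depending only on r, R. -/

import Mathlib

/-!
With `D(x) = (x_p·v_p)² − |v|_p²(|x|_p² − r²)` we have `|v|_p² t_b(x,v) = x_p·v_p − √D(x)`.
When `x_p·v_p = x̃_p·v_p` the linear terms cancel and `D(x̃) − D(x) = |v|_p²(|x|_p² − |x̃|_p²)`.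
Since `√` is ½-Hölder on `ℝ`, i.e. `|√a − √b| ≤ √|a − b|`, and
`||x|_p² − |x̃|_p²| ≤ (|x|_p + |x̃|_p)|x − x̃|_p ≤ 2R|x − x̃|`, the bound holds with `C = √(2R)`.
-/

/-- planar norm of a vector in ℝ³ -/
noncomputable def normp (y : ℝ × ℝ × ℝ) : ℝ := Real.sqrt (y.1 ^ 2 + y.2.1 ^ 2)

/-- planar dot product of vectors in ℝ³ -/
def dotp (y w : ℝ × ℝ × ℝ) : ℝ := y.1 * w.1 + y.2.1 * w.2.1

/-- full Euclidean norm on ℝ³ -/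
noncomputable def enorm3 (y : ℝ × ℝ × ℝ) : ℝ :=
  Real.sqrt (y.1 ^ 2 + y.2.1 ^ 2 + y.2.2 ^ 2)

/-- backward hitting time of the inner circle of radius r, explicit formula -/
noncomputable def tbval (r : ℝ) (x v : ℝ × ℝ × ℝ) : ℝ :=
  (dotp x v - Real.sqrt (dotp x v ^ 2 - normp v ^ 2 * (normp x ^ 2 - r ^ 2)))
    / normp v ^ 2

namespace Real

theorem sqrt_le_sqrt_add_sqrt_abs_sub (a b : ℝ) : √a ≤ √b + √|a - b| := by
  rcases le_or_gt a 0 with ha | ha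
  · rw [sqrt_eq_zero'.2 ha]; positivity
  have hb : b ≤ √b ^ 2 := by
    rcases le_or_gt b 0 with hb | hb
    · nlinarith [sq_nonneg √b]
    · rw [sq_sqrt hb.le]
  rw [sqrt_le_left (by positivity)]
  nlinarith [sq_sqrt (abs_nonneg (a - b)), le_abs_self (a - b),
    mul_nonneg (sqrt_nonneg b) (sqrt_nonneg |a - b|)]

theorem abs_sqrt_sub_sqrt_le_sqrt_abs_sub (a b : ℝ) : |√a - √b| ≤ √|a - b| :=
  abs_sub_le_iff.2
    ⟨by linarith [sqrt_le_sqrt_add_sqrt_abs_sub a b],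
     by linarith [abs_sub_comm b a ▸ sqrt_le_sqrt_add_sqrt_abs_sub b a]⟩

end Real

theorem normp_nonneg (x : ℝ × ℝ × ℝ) : 0 ≤ normp x := Real.sqrt_nonneg _

theorem normp_eq_norm (x : ℝ × ℝ × ℝ) : normp x = ‖(⟨x.1, x.2.1⟩ : ℂ)‖ := by
  rw [Complex.norm_eq_sqrt_sq_add_sq, normp]

theorem abs_normp_sub_normp_le (x y : ℝ × ℝ × ℝ) : |normp x - normp y| ≤ normp (x - y) := by
  have h : (⟨(x - y).1, (x - y).2.1⟩ : ℂ) = ⟨x.1, x.2.1⟩ - ⟨y.1, y.2.1⟩ := by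
    apply Complex.ext <;> simp
  rw [normp_eq_norm, normp_eq_norm, normp_eq_norm, h]
  exact abs_norm_sub_norm_le _ _

theorem abs_normp_sq_sub_normp_sq_le (x y : ℝ × ℝ × ℝ) :
    |normp x ^ 2 - normp y ^ 2| ≤ (normp x + normp y) * normp (x - y) := by
  have hsum : 0 ≤ normp x + normp y := add_nonneg (normp_nonneg x) (normp_nonneg y)
  rw [sq_sub_sq, abs_mul, abs_of_nonneg hsum]
  exact mul_le_mul_of_nonneg_left (abs_normp_sub_normp_le x y) hsum

theorem enorm3_eq_normp {x : ℝ × ℝ × ℝ} (hx : x.2.2 = 0) : enorm3 x = normp x := by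
  rw [enorm3, normp, hx, zero_pow two_ne_zero, add_zero]

theorem dotp_sub_left (x y v : ℝ × ℝ × ℝ) : dotp (x - y) v = dotp x v - dotp y v := by
  simp only [dotp, Prod.fst_sub, Prod.snd_sub]; ring

/-- The discriminant of `|x_p - t v_p|² = r²`, whose smaller root is `tbval r x v`. -/
noncomputable def hitDisc (r : ℝ) (x v : ℝ × ℝ × ℝ) : ℝ :=
  dotp x v ^ 2 - normp v ^ 2 * (normp x ^ 2 - r ^ 2)

section HitTime

variable {r : ℝ} {x y v : ℝ × ℝ × ℝ}

theorem normp_sq_mul_tbval_sub_tbval (h : dotp x v = dotp y v) :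
    normp v ^ 2 * (tbval r x v - tbval r y v) = √(hitDisc r y v) - √(hitDisc r x v) := by
  rcases eq_or_ne (normp v) 0 with hv | hv
  · simp [tbval, hitDisc, hv, h]
  · rw [tbval, tbval, ← hitDisc, ← hitDisc, h]
    field_simp
    ring

theorem hitDisc_sub_hitDisc (h : dotp x v = dotp y v) :
    hitDisc r y v - hitDisc r x v = normp v ^ 2 * (normp x ^ 2 - normp y ^ 2) := by
  rw [hitDisc, hitDisc, h]
  ring

theorem normp_sq_mul_abs_tbval_sub_le (h : dotp x v = dotp y v) :
    normp v ^ 2 * |tbval r x v - tbval r y v|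
      ≤ normp v * √((normp x + normp y) * normp (x - y)) := by
  calc normp v ^ 2 * |tbval r x v - tbval r y v|
      = |√(hitDisc r y v) - √(hitDisc r x v)| := by
        rw [← normp_sq_mul_tbval_sub_tbval h, abs_mul, abs_of_nonneg (sq_nonneg (normp v))]
    _ ≤ √|hitDisc r y v - hitDisc r x v| := Real.abs_sqrt_sub_sqrt_le_sqrt_abs_sub _ _
    _ = √(normp v ^ 2 * |normp x ^ 2 - normp y ^ 2|) := by
        rw [hitDisc_sub_hitDisc h, abs_mul, abs_of_nonneg (sq_nonneg _)]
    _ ≤ √(normp v ^ 2 * ((normp x + normp y) * normp (x - y))) := by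
        gcongr
        exact abs_normp_sq_sub_normp_sq_le x y
    _ = normp v * √((normp x + normp y) * normp (x - y)) := by
        rw [Real.sqrt_mul (sq_nonneg _), Real.sqrt_sq (normp_nonneg v)]

end HitTime

/-- Hölder-1/2 stability of the backward hitting time under spatial shifts
orthogonal to the velocity: if `x, x̃` lie in the annulus, `(x − x̃)_p ⊥ v_p`,
`x̃_ver = x_ver`, and both square roots are well-defined, then
`|v|_p² |t_b(x,v) − t_b(x̃,v)| ≤ C |v|_p |x − x̃|^{1/2}` with `C = C(r,R)`. -/
theorem stmt_13 (r R : ℝ) (hr : 0 < r) (hrR : r < R) :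
    ∃ C > 0, ∀ x y v : ℝ × ℝ × ℝ,
      r < normp x → normp x < R → r < normp y → normp y < R →
      dotp (x - y) v = 0 → x.2.2 = y.2.2 →
      normp v ^ 2 * (normp x ^ 2 - r ^ 2) ≤ dotp x v ^ 2 →
      normp v ^ 2 * (normp y ^ 2 - r ^ 2) ≤ dotp y v ^ 2 →
      normp v ^ 2 * |tbval r x v - tbval r y v|
        ≤ C * normp v * Real.sqrt (enorm3 (x - y)) := by
  refine ⟨√(2 * R), Real.sqrt_pos.2 (by linarith), ?_⟩
  intro x y v _ hxR _ hyR horth hver _ _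
  have hdot : dotp x v = dotp y v := sub_eq_zero.1 (dotp_sub_left x y v ▸ horth)
  have hdist : enorm3 (x - y) = normp (x - y) := enorm3_eq_normp (by simp [hver])
  calc normp v ^ 2 * |tbval r x v - tbval r y v|
      ≤ normp v * √((normp x + normp y) * normp (x - y)) := normp_sq_mul_abs_tbval_sub_le hdot
    _ ≤ normp v * √(2 * R * normp (x - y)) := by
        have := normp_nonneg v
        have := normp_nonneg (x - y)
        gcongr
        linarith
    _ = √(2 * R) * normp v * √(enorm3 (x - y)) := by
        rw [hdist, Real.sqrt_mul (by linarith)]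
        ring
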